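/- arXiv:2208.02756 — 2 statements merged into one kernel-verified Lean document; each statement's English description precedes it below -/
import Mathlib

section
/- Let S, Q be symmetric n×n real matrices with λ_{2m+1}(Q) = 0 for an integer m with 1 ≤ m ≤ n/4 − 1. Then for every positive integer p: tr((S+Q)^{2p+1}) − tr(S^{2p+1}) ≤ 2m·(λ_1(S+Q))^{2p+1} + (λ_n(S+Q))^{2p+1} + 3m·‖S‖^{2p+1}. -/
/-!
Order eigenvalues decreasingly, `λ₁ ≥ ⋯ ≥ λₙ`. Since `Q` has at most `2m` positive eigenvalues,
Weyl's inequality (the usual dimension count on spans of eigenvectors) gives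
`λ_{j+2m}(S+Q) ≤ λ_j(S)`. As `x ↦ x^{2p+1}` is increasing, the odd powers of
`λ_{2m+1}(S+Q), …, λ_{n-1}(S+Q)` are dominated by those of `λ_1(S), …, λ_{n-2m-1}(S)`.
What is left of `tr((S+Q)^{2p+1})` is `2m` top eigenvalues and `λₙ(S+Q)`, and what is left of
`tr(S^{2p+1})` is `2m + 1 ≤ 3m` eigenvalues of `S`, each at least `-‖S‖`.
-/

open Matrix Finset Module
open scoped RealInnerProductSpace

namespace OrthonormalBasis

variable {ι E : Type*} [Fintype ι] [NormedAddCommGroup E] [InnerProductSpace ℝ E]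
  (b : OrthonormalBasis ι ℝ E)

lemma inner_apply_self_eq_sum {T : E →ₗ[ℝ] E} {μ : ι → ℝ} (hT : ∀ i, T (b i) = μ i • b i)
    (x : E) : ⟪T x, x⟫ = ∑ i, μ i * b.repr x i ^ 2 := by
  nth_rewrite 1 [← b.sum_repr x]
  simp only [map_sum, map_smul, hT, smul_smul, sum_inner, real_inner_smul_left,
    ← b.repr_apply_apply]
  exact sum_congr rfl fun i _ => by ring

lemma norm_sq_eq_sum_repr_sq (x : E) : ‖x‖ ^ 2 = ∑ i, b.repr x i ^ 2 := by
  simpa using b.inner_apply_self_eq_sum (T := LinearMap.id) (μ := 1) (by simp) x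

lemma repr_eq_zero_of_mem_span {s : Set ι} {x : E} (hx : x ∈ Submodule.span ℝ (b '' s))
    {i : ι} (hi : i ∉ s) : b.repr x i = 0 := by
  classical
  induction hx using Submodule.span_induction with
  | mem y hy =>
    obtain ⟨j, hj, rfl⟩ := hy
    simp [b.repr_self, show i ≠ j by rintro rfl; exact hi hj]
  | zero => simp
  | add y z _ _ hy hz => simp [hy, hz]
  | smul a y _ hy => simp [hy]

lemma finrank_span_image (s : Finset ι) :
    finrank ℝ (Submodule.span ℝ (b '' s)) = #s := by
  rw [Set.image_eq_range]
  exact (finrank_span_eq_card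
    (b.orthonormal.linearIndependent.comp _ Subtype.val_injective)).trans (Fintype.card_coe s)

lemma inner_apply_self_le_of_mem_span {T : E →ₗ[ℝ] E} {μ : ι → ℝ}
    (hT : ∀ i, T (b i) = μ i • b i) {s : Set ι} {c : ℝ} (hc : ∀ i ∈ s, μ i ≤ c) {x : E}
    (hx : x ∈ Submodule.span ℝ (b '' s)) :
    ⟪T x, x⟫ ≤ c * ‖x‖ ^ 2 := by
  rw [b.inner_apply_self_eq_sum hT, b.norm_sq_eq_sum_repr_sq, mul_sum]
  refine sum_le_sum fun i _ => ?_
  by_cases hi : i ∈ s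
  · exact mul_le_mul_of_nonneg_right (hc i hi) (sq_nonneg _)
  · simp [b.repr_eq_zero_of_mem_span hx hi]

lemma le_inner_apply_self_of_mem_span {T : E →ₗ[ℝ] E} {μ : ι → ℝ}
    (hT : ∀ i, T (b i) = μ i • b i) {s : Set ι} {c : ℝ} (hc : ∀ i ∈ s, c ≤ μ i) {x : E}
    (hx : x ∈ Submodule.span ℝ (b '' s)) :
    c * ‖x‖ ^ 2 ≤ ⟪T x, x⟫ := by
  rw [b.inner_apply_self_eq_sum hT, b.norm_sq_eq_sum_repr_sq, mul_sum]
  refine sum_le_sum fun i _ => ?_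
  by_cases hi : i ∈ s
  · exact mul_le_mul_of_nonneg_right (hc i hi) (sq_nonneg _)
  · simp [b.repr_eq_zero_of_mem_span hx hi]

end OrthonormalBasis

namespace Submodule

variable {K V : Type*} [DivisionRing K] [AddCommGroup V] [Module K V] [FiniteDimensional K V]

lemma finrank_add_finrank_le_finrank_add_finrank_inf (s t : Submodule K V) :
    finrank K s + finrank K t ≤ finrank K V + finrank K ↥(s ⊓ t) := by
  rw [← finrank_sup_add_finrank_inf_eq]
  exact Nat.add_le_add_right (finrank_le _) _

lemma exists_ne_zero_mem_inf_inf {s t u : Submodule K V}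
    (h : 2 * finrank K V < finrank K s + finrank K t + finrank K u) :
    ∃ x ∈ s ⊓ t ⊓ u, x ≠ 0 := by
  have hst := finrank_add_finrank_le_finrank_add_finrank_inf s t
  have hstu := finrank_add_finrank_le_finrank_add_finrank_inf (s ⊓ t) u
  exact exists_mem_ne_zero_of_ne_bot fun hbot => by
    rw [hbot, finrank_bot] at hstu
    omega

end Submodule

namespace LinearMap.IsSymmetric

variable {E : Type*} [NormedAddCommGroup E] [InnerProductSpace ℝ E] [FiniteDimensional ℝ E]
  {N : ℕ} (hN : finrank ℝ E = N) {T U : E →ₗ[ℝ] E}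

theorem eigenvalues_add_le (hT : T.IsSymmetric) (hU : U.IsSymmetric) {W : Submodule ℝ E}
    (hW : ∀ x ∈ W, ⟪U x, x⟫ ≤ 0) {r : ℕ} (hWr : N ≤ finrank ℝ W + r) {i j : Fin N}
    (hij : (i : ℕ) + r ≤ j) : (hT.add hU).eigenvalues hN j ≤ hT.eigenvalues hN i := by
  let b := (hT.add hU).eigenvectorBasis hN
  let b' := hT.eigenvectorBasis hN
  obtain ⟨x, ⟨⟨hx₁, hx₂⟩, hx₃⟩, hx⟩ := Submodule.exists_ne_zero_mem_inf_inf
    (s := Submodule.span ℝ (b '' (Iic j : Finset _)))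
    (t := Submodule.span ℝ (b' '' (Ici i : Finset _))) (u := W) (by
      rw [b.finrank_span_image, b'.finrank_span_image, Fin.card_Iic, Fin.card_Ici, hN]; omega)
  have h₁ : (hT.add hU).eigenvalues hN j * ‖x‖ ^ 2 ≤ ⟪(T + U) x, x⟫ :=
    b.le_inner_apply_self_of_mem_span ((hT.add hU).apply_eigenvectorBasis hN)
      (fun k hk => (hT.add hU).eigenvalues_antitone hN (by simpa using hk)) hx₁
  have h₂ : ⟪T x, x⟫ ≤ hT.eigenvalues hN i * ‖x‖ ^ 2 :=
    b'.inner_apply_self_le_of_mem_span (hT.apply_eigenvectorBasis hN)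
      (fun k hk => hT.eigenvalues_antitone hN (by simpa using hk)) hx₂
  rw [add_apply, inner_add_left] at h₁
  exact le_of_mul_le_mul_right (by linarith [hW x hx₃]) (pow_pos (norm_pos_iff.2 hx) 2)

end LinearMap.IsSymmetric

namespace Matrix.IsHermitian

section RCLike

variable {𝕜 n : Type*} [RCLike 𝕜] [Fintype n] [DecidableEq n] {A : Matrix n n 𝕜}

lemma trace_pow (hA : A.IsHermitian) (k : ℕ) :
    (A ^ k).trace = ∑ i, (hA.eigenvalues i : 𝕜) ^ k := by
  conv_lhs => rw [hA.spectral_theorem, ← map_pow, diagonal_pow, Unitary.conjStarAlgAut_apply,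
    trace_mul_cycle, Unitary.coe_star_mul_self, one_mul, trace_diagonal]
  rfl

-- `eigenvalues` is `eigenvalues₀` (which is antitone) reindexed along a noncanonical
-- `n ≃ Fin (card n)`, so it need not be sorted even when `n = Fin k`.
lemma sum_comp_eigenvalues {α : Type*} [AddCommMonoid α] (hA : A.IsHermitian) (f : ℝ → α) :
    ∑ i, f (hA.eigenvalues i) = ∑ j, f (hA.eigenvalues₀ j) :=
  Equiv.sum_comp _ (f ∘ hA.eigenvalues₀)

lemma iSup_comp_eigenvalues {α : Type*} [SupSet α] (hA : A.IsHermitian) (f : ℝ → α) :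
    ⨆ i, f (hA.eigenvalues i) = ⨆ j, f (hA.eigenvalues₀ j) :=
  Equiv.iSup_comp (g := f ∘ hA.eigenvalues₀) _

lemma iInf_comp_eigenvalues {α : Type*} [InfSet α] (hA : A.IsHermitian) (f : ℝ → α) :
    ⨅ i, f (hA.eigenvalues i) = ⨅ j, f (hA.eigenvalues₀ j) :=
  Equiv.iInf_comp (g := f ∘ hA.eigenvalues₀) _

end RCLike

section Real

variable {n : Type*} [Fintype n] [DecidableEq n] {A B : Matrix n n ℝ}

lemma toEuclideanLin_eigenvectorBasis (hA : A.IsHermitian) (i : n) :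
    toEuclideanLin A (hA.eigenvectorBasis i) = hA.eigenvalues i • hA.eigenvectorBasis i := by
  ext; simp [hA.mulVec_eigenvectorBasis]

theorem eigenvalues₀_add_le (hA : A.IsHermitian) (hB : B.IsHermitian) {r : ℕ}
    (hr : #{i | 0 < hB.eigenvalues i} ≤ r) {i j : Fin (Fintype.card n)}
    (hij : (i : ℕ) + r ≤ j) :
    (hA.add hB).eigenvalues₀ j ≤ hA.eigenvalues₀ i := by
  let s : Finset n := {k | hB.eigenvalues k ≤ 0}
  have hW (x) (hx : x ∈ Submodule.span ℝ (hB.eigenvectorBasis '' s)) :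
      ⟪toEuclideanLin B x, x⟫ ≤ 0 := by
    simpa using hB.eigenvectorBasis.inner_apply_self_le_of_mem_span
      hB.toEuclideanLin_eigenvectorBasis (c := 0) (fun k hk => by simpa [s] using hk) hx
  have hdim :
      Fintype.card n ≤ finrank ℝ (Submodule.span ℝ (hB.eigenvectorBasis '' s)) + r := by
    rw [hB.eigenvectorBasis.finrank_span_image, ← card_univ,
      ← card_filter_add_card_filter_not (p := fun k => hB.eigenvalues k ≤ 0)]
    simp only [not_le]
    exact Nat.add_le_add_left hr _
  unfold eigenvalues₀
  convert (isSymmetric_toEuclideanLin_iff.mpr hA).eigenvalues_add_le finrank_euclideanSpace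
    (isSymmetric_toEuclideanLin_iff.mpr hB) hW hdim hij using 3
  exact map_add _ _ _

end Real

end Matrix.IsHermitian

lemma sum_range_pow_sub_sum_range_pow_le_of_shift {r L o : ℕ} (ho : Odd o) {μ ν : ℕ → ℝ}
    {a b c : ℝ} (ha : ∀ k < r, μ k ≤ a) (hb : μ (r + L) ≤ b) (hc : ∀ k ≤ r, -c ≤ ν (L + k))
    (hμν : ∀ k < L, μ (r + k) ≤ ν k) :
    ∑ k ∈ range (r + L + 1), μ k ^ o - ∑ k ∈ range (r + L + 1), ν k ^ o
      ≤ r * a ^ o + b ^ o + (r + 1) * c ^ o := by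
  have hpow := ho.strictMono_pow (R := ℝ) |>.monotone
  have hμ : ∑ k ∈ range (r + L + 1), μ k ^ o
      = ∑ k ∈ range r, μ k ^ o + ∑ k ∈ range L, μ (r + k) ^ o + μ (r + L) ^ o := by
    rw [sum_range_succ, sum_range_add]
  have hν : ∑ k ∈ range (r + L + 1), ν k ^ o
      = ∑ k ∈ range L, ν k ^ o + ∑ k ∈ range (r + 1), ν (L + k) ^ o := by
    rw [show r + L + 1 = L + (r + 1) by ring, sum_range_add]
  have h_top : ∑ k ∈ range r, μ k ^ o ≤ r * a ^ o := by
    simpa using sum_le_card_nsmul _ _ _ fun k hk => hpow (ha k (mem_range.1 hk))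
  have h_mid : ∑ k ∈ range L, μ (r + k) ^ o ≤ ∑ k ∈ range L, ν k ^ o :=
    sum_le_sum fun k hk => hpow (hμν k (mem_range.1 hk))
  have h_bot : -((r + 1) * c ^ o) ≤ ∑ k ∈ range (r + 1), ν (L + k) ^ o := by
    simpa [ho.neg_pow] using card_nsmul_le_sum _ _ _
      fun k hk => hpow (hc k (Nat.lt_succ_iff.1 (mem_range.1 hk)))
  linarith [hpow hb]

theorem sum_pow_sub_sum_pow_le_of_shift {N r o : ℕ} (hrN : r < N) (ho : Odd o)
    {μ ν : Fin N → ℝ} (hμ : Antitone μ) (hμν : ∀ i j : Fin N, (i : ℕ) + r ≤ j → μ j ≤ ν i) :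
    ∑ i, μ i ^ o - ∑ i, ν i ^ o
      ≤ r * (⨆ i, μ i) ^ o + (⨅ i, μ i) ^ o + (r + 1) * (⨆ i, |ν i|) ^ o := by
  obtain ⟨L, rfl⟩ : ∃ L, N = r + L + 1 := ⟨N - r - 1, by omega⟩
  let μ' (k : ℕ) : ℝ := if h : k < r + L + 1 then μ ⟨k, h⟩ else 0
  let ν' (k : ℕ) : ℝ := if h : k < r + L + 1 then ν ⟨k, h⟩ else 0
  have hμ' (k : ℕ) (h : k < r + L + 1) : μ' k = μ ⟨k, h⟩ := dif_pos h
  have hν' (k : ℕ) (h : k < r + L + 1) : ν' k = ν ⟨k, h⟩ := dif_pos h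
  have hsum_μ : ∑ i, μ i ^ o = ∑ k ∈ range (r + L + 1), μ' k ^ o := by
    rw [← Fin.sum_univ_eq_sum_range]
    exact sum_congr rfl fun i _ => by rw [hμ' i i.isLt]
  have hsum_ν : ∑ i, ν i ^ o = ∑ k ∈ range (r + L + 1), ν' k ^ o := by
    rw [← Fin.sum_univ_eq_sum_range]
    exact sum_congr rfl fun i _ => by rw [hν' i i.isLt]
  rw [hsum_μ, hsum_ν]
  refine sum_range_pow_sub_sum_range_pow_le_of_shift ho (fun k hk => ?_) ?_ (fun k hk => ?_)
    (fun k hk => ?_)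
  · rw [hμ' k (by omega)]
    exact le_ciSup (Finite.bddAbove_range μ) _
  · rw [hμ' _ (by omega)]
    exact le_ciInf fun i => hμ (Fin.le_last i)
  · rw [hν' _ (by omega)]
    exact neg_le_of_abs_le (le_ciSup (Finite.bddAbove_range fun i => |ν i|) _)
  · rw [hμ' _ (by omega), hν' k (by omega)]
    exact hμν _ _ (by simp [add_comm])

theorem stmt5_general {n : ℕ} (m p : ℕ) (S Q : Matrix (Fin n) (Fin n) ℝ)
    (hS : S.IsHermitian) (hQ : Q.IsHermitian)
    (hm1 : 1 ≤ m) (hm2 : (m : ℝ) ≤ (n : ℝ) / 4 - 1)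
    (hrank : (Finset.univ.filter (fun i => hQ.eigenvalues i ≠ 0)).card ≤ 2 * m) :
    Matrix.trace ((S + Q) ^ (2 * p + 1)) - Matrix.trace (S ^ (2 * p + 1))
      ≤ 2 * (m : ℝ) * (⨆ i, (hS.add hQ).eigenvalues i) ^ (2 * p + 1)
        + (⨅ i, (hS.add hQ).eigenvalues i) ^ (2 * p + 1)
        + 3 * (m : ℝ) * (⨆ i, |hS.eigenvalues i|) ^ (2 * p + 1) := by
  have h2m : 2 * m < Fintype.card (Fin n) := by
    rw [Fintype.card_fin]
    exact_mod_cast (by linarith : (2 * m : ℝ) < n)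
  have hpos : #{i | 0 < hQ.eigenvalues i} ≤ 2 * m :=
    (card_le_card (monotone_filter_right _ fun _ _ h => h.ne')).trans hrank
  have key := sum_pow_sub_sum_pow_le_of_shift h2m (odd_two_mul_add_one p)
    (hS.add hQ).eigenvalues₀_antitone fun i j hij => hS.eigenvalues₀_add_le hQ hpos hij
  rw [hS.trace_pow, (hS.add hQ).trace_pow]
  simp only [RCLike.ofReal_real_eq_id, id]
  rw [hS.sum_comp_eigenvalues (· ^ (2 * p + 1)),
    (hS.add hQ).sum_comp_eigenvalues (· ^ (2 * p + 1)), hS.iSup_comp_eigenvalues (|·|),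
    (hS.add hQ).iSup_comp_eigenvalues (fun x => x),
    (hS.add hQ).iInf_comp_eigenvalues (fun x => x)]
  have hnorm : 0 ≤ (⨆ j, |hS.eigenvalues₀ j|) ^ (2 * p + 1) :=
    pow_nonneg (Real.iSup_nonneg fun _ => abs_nonneg _) _
  have hm : (2 * m + 1 : ℝ) ≤ 3 * m := by
    have : (1 : ℝ) ≤ m := by exact_mod_cast hm1
    linarith
  push_cast at key
  linarith [mul_le_mul_of_nonneg_right hm hnorm]

/-- Odd-power trace difference bound for a low-rank symmetric perturbation
(Lemma 9 of the companion paper): if `Q` has at most `2m` nonzero eigenvalues and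
`1 ≤ m ≤ n/4 - 1`, then for every `p ≥ 1`,
`tr((S+Q)^{2p+1}) − tr(S^{2p+1}) ≤ 2m·λ₁(S+Q)^{2p+1} + λₙ(S+Q)^{2p+1} + 3m‖S‖^{2p+1}`. -/
theorem stmt5 {n : ℕ} (m p : ℕ) (S Q : Matrix (Fin n) (Fin n) ℝ)
    (hS : S.IsHermitian) (hQ : Q.IsHermitian)
    (hm1 : 1 ≤ m) (hm2 : (m : ℝ) ≤ (n : ℝ) / 4 - 1)
    (hrank : (Finset.univ.filter (fun i => hQ.eigenvalues i ≠ 0)).card ≤ 2 * m)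
    (hp : 1 ≤ p) :
    Matrix.trace ((S + Q) ^ (2 * p + 1)) - Matrix.trace (S ^ (2 * p + 1))
      ≤ 2 * (m : ℝ) * (⨆ i, (hS.add hQ).eigenvalues i) ^ (2 * p + 1)
        + (⨅ i, (hS.add hQ).eigenvalues i) ^ (2 * p + 1)
        + 3 * (m : ℝ) * (⨆ i, |hS.eigenvalues i|) ^ (2 * p + 1) :=
  stmt5_general m p S Q hS hQ hm1 hm2 hrank
end

section
/- With G_2 and f as defined (f(θ)=2 for θ≤1, f(θ)=θ+1/θ for θ≥1), G_2(θ) < f(θ) for all θ > 0. The key inequality is θ^4/(1+θ^2)^3 < 1/5 for all θ > 0. -/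
noncomputable def f (x : ℝ) : ℝ := if x < 1 then 2 else x + 1 / x

/-!
Cubing the equation defining `x₁` removes the fractional powers and gives
`46656 θ⁶ x₁ (1 - x₁)⁶ = 25 (6 - 7x₁)⁷`.

For `θ ≥ 1`, `G₂(θ) < θ + 1/θ` is equivalent to `θ² x₁ < 6 - 7x₁`; cubing and using the relation,
this becomes `5x₁(6 - 7x₁)² < 216(1 - x₁)³`, a decreasing cubic in `x₁` that is still positive
at `x₁ = 6/7`.

For `θ < 1`, `G₂(θ) < 2` is immediate when `x₁ ≤ 3/4`. Otherwise it amounts to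
`3θ(1 - x₁) < 6 - 7x₁`, whose sixth power reduces through the relation to `25(6 - 7x₁) < 64x₁`.
-/

lemma rpow_div_three_pow_three {y : ℝ} (hy : 0 ≤ y) (n : ℕ) :
    (y ^ ((n : ℝ) / 3)) ^ 3 = y ^ n := by
  rw [← Real.rpow_natCast, ← Real.rpow_mul hy, ← Real.rpow_natCast]
  congr 1
  push_cast
  ring

lemma cube_eq_of_rpow_div_eq {a x c d : ℝ} (ha : 0 ≤ a) (hx : 0 < x) (hc : c ≠ 0)
    (h : a ^ ((7 : ℝ) / 3) / (x ^ ((1 : ℝ) / 3) * c) = d / (5 : ℝ) ^ ((2 : ℝ) / 3)) :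
    25 * a ^ 7 = d ^ 3 * x * c ^ 3 := by
  have hcube := congrArg (· ^ 3) h
  simp only [div_pow, mul_pow] at hcube
  rw [show ((7 : ℝ) / 3) = ((7 : ℕ) : ℝ) / 3 by norm_num,
    show ((1 : ℝ) / 3) = ((1 : ℕ) : ℝ) / 3 by norm_num,
    show ((2 : ℝ) / 3) = ((2 : ℕ) : ℝ) / 3 by norm_num,
    rpow_div_three_pow_three ha, rpow_div_three_pow_three hx.le,
    rpow_div_three_pow_three (by norm_num : (0 : ℝ) ≤ 5)] at hcube
  field_simp at hcube
  linear_combination hcube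

lemma five_mul_mul_sq_lt {x : ℝ} (hx : x ≤ 6 / 7) :
    5 * x * (6 - 7 * x) ^ 2 < 216 * (1 - x) ^ 3 := by
  nlinarith [sq_nonneg (x - 1 / 2), mul_nonneg (by linarith : (0 : ℝ) ≤ 6 / 7 - x) (sq_nonneg (x - 1 / 2))]

section

variable {θ x : ℝ} (hcube : 46656 * θ ^ 6 * x * (1 - x) ^ 6 = 25 * (6 - 7 * x) ^ 7)
include hcube

lemma sq_mul_lt_of_cube_eq (hx0 : 0 < x) (hx6 : x < 6 / 7) : θ ^ 2 * x < 6 - 7 * x := by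
  have ha : 0 < 6 - 7 * x := by linarith
  have h1x : 0 < (1 - x) ^ 6 := pow_pos (by linarith) 6
  have hpoly : 25 * x ^ 2 * (6 - 7 * x) ^ 4 < 46656 * (1 - x) ^ 6 := by
    have := pow_lt_pow_left₀ (five_mul_mul_sq_lt hx6.le) (by positivity) two_ne_zero
    linear_combination this
  refine lt_of_pow_lt_pow_left₀ 3 ha.le (lt_of_mul_lt_mul_left ?_ h1x.le)
  calc (1 - x) ^ 6 * (θ ^ 2 * x) ^ 3
        = 25 * x ^ 2 * (6 - 7 * x) ^ 4 * (6 - 7 * x) ^ 3 / 46656 := by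
          linear_combination x ^ 2 / 46656 * hcube
    _ < 46656 * (1 - x) ^ 6 * (6 - 7 * x) ^ 3 / 46656 := by gcongr
    _ = (1 - x) ^ 6 * (6 - 7 * x) ^ 3 := by ring

lemma three_mul_mul_lt_of_cube_eq (hx0 : 150 / 239 < x) (hx6 : x < 6 / 7) :
    3 * θ * (1 - x) < 6 - 7 * x := by
  have ha : 0 < 6 - 7 * x := by linarith
  refine lt_of_pow_lt_pow_left₀ 6 ha.le
    (lt_of_mul_lt_mul_left ?_ (by linarith : (0 : ℝ) ≤ 64 * x))
  calc 64 * x * (3 * θ * (1 - x)) ^ 6 = 25 * (6 - 7 * x) * (6 - 7 * x) ^ 6 := by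
        linear_combination hcube
    _ < 64 * x * (6 - 7 * x) ^ 6 := mul_lt_mul_of_pos_right (by linarith) (by positivity)

end

lemma pow_four_div_one_add_sq_pow_three_lt (θ : ℝ) : θ ^ 4 / (1 + θ ^ 2) ^ 3 < 1 / 5 := by
  rw [div_lt_div_iff₀ (by positivity) (by norm_num)]
  nlinarith [sq_nonneg θ, sq_nonneg (θ ^ 2 - 1), mul_nonneg (sq_nonneg θ) (sq_nonneg (θ ^ 2 - 1))]

theorem stmt12_general (θ : ℝ) (x₁ : ℝ) (hx₁ : x₁ ∈ Set.Ioo (0 : ℝ) (6 / 7))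
    (heq : (6 - 7 * x₁) ^ ((7 : ℝ) / 3) / (x₁ ^ ((1 : ℝ) / 3) * (1 - x₁) ^ 2)
      = 36 * θ ^ 2 / (5 : ℝ) ^ ((2 : ℝ) / 3)) :
    θ * (2 - 2 * x₁) / (2 - 7 * x₁ / 3) < f θ ∧
    θ ^ 4 / (1 + θ ^ 2) ^ 3 < 1 / 5 := by
  obtain ⟨hx0, hx6⟩ := hx₁
  have hcube : 46656 * θ ^ 6 * x₁ * (1 - x₁) ^ 6 = 25 * (6 - 7 * x₁) ^ 7 := by
    have := cube_eq_of_rpow_div_eq (by linarith) hx0 (pow_ne_zero 2 (by linarith)) heq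
    linear_combination -this
  refine ⟨?_, pow_four_div_one_add_sq_pow_three_lt θ⟩
  rw [div_lt_iff₀ (by linarith), f]
  split_ifs with hθ
  · rcases le_or_gt x₁ (3 / 4) with hx | hx
    · linarith [mul_lt_mul_of_pos_right hθ (by linarith : (0 : ℝ) < 2 - 2 * x₁)]
    · linarith [three_mul_mul_lt_of_cube_eq hcube (by linarith) hx6]
  · have hθ0 : 0 < θ := by linarith
    rw [← mul_lt_mul_iff_of_pos_left hθ0]
    field_simp
    linarith [sq_mul_lt_of_cube_eq hcube hx0 hx6]

/-- `G₂(θ) < f(θ)` for all `θ > 0`, where `x₁ ∈ (0,6/7)` solves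
`(6-7x₁)^{7/3}/(x₁^{1/3}(1-x₁)²) = 36θ²/5^{2/3}`; the key inequality is
`θ⁴/(1+θ²)³ < 1/5`. -/
theorem stmt12 (θ : ℝ) (hθ : 0 < θ) (x₁ : ℝ) (hx₁ : x₁ ∈ Set.Ioo (0 : ℝ) (6 / 7))
    (heq : (6 - 7 * x₁) ^ ((7 : ℝ) / 3) / (x₁ ^ ((1 : ℝ) / 3) * (1 - x₁) ^ 2)
      = 36 * θ ^ 2 / (5 : ℝ) ^ ((2 : ℝ) / 3)) :
    θ * (2 - 2 * x₁) / (2 - 7 * x₁ / 3) < f θ ∧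
    θ ^ 4 / (1 + θ ^ 2) ^ 3 < 1 / 5 :=
  stmt12_general θ x₁ hx₁ heq
end
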